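/- arXiv:1507.08323 — 2 statements merged into one kernel-verified Lean document; each statement's English description precedes it below -/
import Mathlib

section
/- Let T = diag(λ₁, ..., λ_N) be a diagonal matrix on ℂ^N. Then T is convex-cyclic if and only if the λ_k are distinct, |λ_k| > 1 for all k, and λ_j ≠ conj(λ_k) for all j, k. When convex-cyclic, the convex-cyclic vectors for T are exactly the vectors with all coordinates nonzero. -/
/-- A convex-polynomial: a convex combination of the monomials `1, z, z², …`. -/
def IsConvexPoly (p : Polynomial ℂ) : Prop :=
  ∃ (n : ℕ) (a : ℕ → ℝ), (∀ k, 0 ≤ a k) ∧ (∑ k ∈ Finset.range (n + 1), a k) = 1 ∧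
    p = ∑ k ∈ Finset.range (n + 1), Polynomial.C ((a k : ℂ)) * Polynomial.X ^ k

/-- `v` is a convex-cyclic vector for the matrix `T` on `ℂ^N`. -/
def IsConvexCyclicVector {N : ℕ} (T : Matrix (Fin N) (Fin N) ℂ) (v : Fin N → ℂ) : Prop :=
  Dense {w : Fin N → ℂ | ∃ p, IsConvexPoly p ∧ (Polynomial.aeval T p).mulVec v = w}

open Filter Topology Polynomial Finset

/-!
The set of vectors `p(T) v`, `p` a convex-polynomial, is convex. If it is not dense, Hahn–Banach
gives a complex functional `f` and `u` with `Re f (p(T) v) < u` for every convex-polynomial `p`. For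
`T = diag(λ)` and `v` with nonzero coordinates, `Re f (Tⁿ v) = Re ∑ₖ cₖ λₖⁿ` with `c ≠ 0`, and this
is unbounded above: divided by `rⁿ`, `r` the largest `|λₖ|` with `cₖ ≠ 0`, its dominant part
`g n = Re ∑ₖ cₖ μₖⁿ` (`|μₖ| = 1`) has Cesàro mean `0` and Cesàro mean square `∑ |cₖ|² / 2 > 0`,
because the `μₖ` are distinct and no product `μⱼ μₖ` equals `1` (this is where `λⱼ ≠ conj λₖ`
enters). A bounded sequence with these means is infinitely often `≥ δ` for some `δ > 0`.

Conversely, each failing condition confines all `p(T) v` to a closed proper subset of `ℂ^N`: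
`wᵢ = 0`, `wⱼ vₖ = wₖ vⱼ`, `|wₖ| ≤ |vₖ|`, or `wⱼ conj vₖ = conj wₖ vⱼ`.
-/

section Cesaro

variable {E F : Type*}

noncomputable def cesaroMean [AddCommGroup E] [Module ℝ E] (M : ℕ) : (ℕ → E) →ₗ[ℝ] E :=
  (M : ℝ)⁻¹ • ∑ n ∈ range M, LinearMap.proj n

@[simp]
theorem cesaroMean_apply [AddCommGroup E] [Module ℝ E] (M : ℕ) (u : ℕ → E) :
    cesaroMean M u = (M : ℝ)⁻¹ • ∑ n ∈ range M, u n := by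
  simp [cesaroMean]

theorem cesaroMean_comp [AddCommGroup E] [Module ℝ E] [AddCommGroup F] [Module ℝ F] (M : ℕ)
    (L : E →ₗ[ℝ] F) (u : ℕ → E) : cesaroMean M (L ∘ u) = L (cesaroMean M u) := by
  simp [map_sum]

theorem cesaroMean_mono {M : ℕ} {u w : ℕ → ℝ} (h : ∀ n, u n ≤ w n) :
    cesaroMean M u ≤ cesaroMean M w := by
  simp only [cesaroMean_apply, smul_eq_mul]
  gcongr with n
  exact h n

section Normed

variable [NormedAddCommGroup E] [NormedSpace ℝ E] [NormedAddCommGroup F] [NormedSpace ℝ F]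
  {u : ℕ → E} {a : E}

theorem tendsto_cesaroMean_of_tendsto (h : Tendsto u atTop (𝓝 a)) :
    Tendsto (fun M => cesaroMean M u) atTop (𝓝 a) := by
  simpa using h.cesaro_smul

theorem Filter.Tendsto.comp_cesaroMean (h : Tendsto (fun M => cesaroMean M u) atTop (𝓝 a))
    (L : E →L[ℝ] F) : Tendsto (fun M => cesaroMean M (L ∘ u)) atTop (𝓝 (L a)) := by
  have hL : ∀ M, cesaroMean M (L ∘ u) = L (cesaroMean M u) :=
    fun M => cesaroMean_comp M L.toLinearMap u
  simp only [hL]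
  exact (L.continuous.tendsto a).comp h

end Normed

end Cesaro

theorem tendsto_cesaroMean_pow {ν : ℂ} (hν : ‖ν‖ ≤ 1) :
    Tendsto (fun M => cesaroMean M (ν ^ ·)) atTop (𝓝 (if ν = 1 then 1 else 0)) := by
  split_ifs with h
  · simpa [h] using tendsto_cesaroMean_of_tendsto (tendsto_const_nhds (x := (1 : ℂ)))
  · refine squeeze_zero_norm (a := fun M : ℕ => (M : ℝ)⁻¹ * (2 / ‖ν - 1‖)) (fun M => ?_)
      (tendsto_inv_atTop_zero.comp tendsto_natCast_atTop_atTop |>.mul_const _ |>.trans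
        (by simp))
    have hgeom : ‖ν ^ M - 1‖ ≤ 2 := by
      calc ‖ν ^ M - 1‖ ≤ ‖ν ^ M‖ + ‖(1 : ℂ)‖ := norm_sub_le _ _
        _ ≤ 1 + 1 := by gcongr; exacts [norm_pow ν M ▸ pow_le_one₀ (norm_nonneg ν) hν, by simp]
        _ = 2 := by norm_num
    rw [cesaroMean_apply, geom_sum_eq h, norm_smul, norm_div, norm_inv, Real.norm_natCast]
    gcongr

theorem tendsto_cesaroMean_sum_mul_pow {ι : Type*} (s : Finset ι) (c ν : ι → ℂ)
    (hν : ∀ i ∈ s, ‖ν i‖ ≤ 1) :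
    Tendsto (fun M => cesaroMean M fun n => ∑ i ∈ s, c i * ν i ^ n) atTop
      (𝓝 (∑ i ∈ s with ν i = 1, c i)) := by
  classical
  have hmean : ∀ M, (cesaroMean M fun n => ∑ i ∈ s, c i * ν i ^ n)
      = ∑ i ∈ s, c i * cesaroMean M (ν i ^ ·) := by
    intro M
    rw [cesaroMean_apply, sum_comm, smul_sum]
    refine sum_congr rfl fun i _ => ?_
    rw [← mul_sum, ← mul_smul_comm, cesaroMean_apply]
  simp only [hmean, sum_filter]
  exact tendsto_finsetSum _ fun i hi => (tendsto_cesaroMean_pow (hν i hi)).const_mul (c i) |>.trans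
    (by split_ifs <;> simp)

theorem exists_le_of_tendsto_cesaroMean {g : ℕ → ℝ} {B V δ : ℝ} (hg : ∀ n, |g n| ≤ B)
    (hmean : Tendsto (fun M => cesaroMean M g) atTop (𝓝 0))
    (hsq : Tendsto (fun M => cesaroMean M fun n => g n ^ 2) atTop (𝓝 V))
    (hδ : 0 ≤ δ) (hδV : 2 * B * δ < V) : ∃ n, δ ≤ g n := by
  by_contra! hlt
  have hpt : ∀ n, g n ^ 2 + B * g n ≤ 2 * B * δ := by
    intro n
    have hB : 0 ≤ B := (abs_nonneg _).trans (hg n)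
    have hsq_le : g n ^ 2 ≤ B * |g n| := by
      rw [← sq_abs, sq]
      exact mul_le_mul_of_nonneg_right (hg n) (abs_nonneg _)
    have habs : |g n| ≤ 2 * δ - g n := by
      rcases abs_cases (g n) with ⟨h, _⟩ | ⟨h, _⟩ <;> linarith [hlt n]
    nlinarith
  have hlim : Tendsto (fun M => cesaroMean M fun n => g n ^ 2 + B * g n) atTop (𝓝 (V + B * 0)) := by
    have hsplit : (fun n => g n ^ 2 + B * g n) = (fun n => g n ^ 2) + B • g := rfl
    simpa only [hsplit, map_add, map_smul, smul_eq_mul] using hsq.add (hmean.const_mul B)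
  have := le_of_tendsto_of_tendsto' hlim (tendsto_cesaroMean_of_tendsto tendsto_const_nhds)
    fun M => cesaroMean_mono (hpt ·)
  linarith

theorem sum_mul_pow_mul_sum_mul_pow {ι κ R : Type*} [CommSemiring R] (s : Finset ι) (t : Finset κ)
    (a x : ι → R) (b y : κ → R) (n : ℕ) :
    (∑ i ∈ s, a i * x i ^ n) * (∑ j ∈ t, b j * y j ^ n)
      = ∑ p ∈ s ×ˢ t, (a p.1 * b p.2) * (x p.1 * y p.2) ^ n := by
  rw [sum_mul_sum, sum_product]
  refine sum_congr rfl fun i _ => sum_congr rfl fun j _ => ?_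
  ring

section UnitCircle

variable {ι : Type*} {K : Finset ι} {b μ : ι → ℂ}

theorem tendsto_cesaroMean_re_sum_mul_pow (hnorm : ∀ i ∈ K, ‖μ i‖ = 1)
    (hne : ∀ i ∈ K, μ i ≠ 1) :
    Tendsto (fun M => cesaroMean M fun n => (∑ i ∈ K, b i * μ i ^ n).re) atTop (𝓝 0) := by
  have h := tendsto_cesaroMean_sum_mul_pow K b μ fun i hi => (hnorm i hi).le
  rw [filter_false_of_mem hne, sum_empty] at h
  simpa using h.comp_cesaroMean Complex.reCLM

theorem filter_mul_conj_eq_one_eq_diag [DecidableEq ι] (hnorm : ∀ i ∈ K, ‖μ i‖ = 1)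
    (hinj : Set.InjOn μ K) :
    (K ×ˢ K).filter (fun p => μ p.1 * starRingEnd ℂ (μ p.2) = 1) = K.diag := by
  rw [diag_eq_filter]
  refine filter_congr fun p hp => ?_
  rw [mem_product] at hp
  have hμ2 : μ p.2 * starRingEnd ℂ (μ p.2) = 1 := by
    rw [Complex.mul_conj, Complex.normSq_eq_norm_sq, hnorm _ hp.2]
    norm_num
  refine ⟨fun h => hinj hp.1 hp.2 ?_, fun h => h ▸ hμ2⟩
  exact mul_right_cancel₀ (right_ne_zero_of_mul_eq_one hμ2) (h.trans hμ2.symm)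

theorem tendsto_cesaroMean_re_sum_mul_pow_sq (hnorm : ∀ i ∈ K, ‖μ i‖ = 1) (hinj : Set.InjOn μ K)
    (hmul : ∀ i ∈ K, ∀ j ∈ K, μ i * μ j ≠ 1) :
    Tendsto (fun M => cesaroMean M fun n => (∑ i ∈ K, b i * μ i ^ n).re ^ 2) atTop
      (𝓝 ((∑ i ∈ K, ‖b i‖ ^ 2) / 2)) := by
  classical
  set h : ℕ → ℂ := fun n => ∑ i ∈ K, b i * μ i ^ n
  have hnorm2 : ∀ p ∈ K ×ˢ K, ‖μ p.1 * μ p.2‖ ≤ 1 ∧ ‖μ p.1 * starRingEnd ℂ (μ p.2)‖ ≤ 1 := by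
    intro p hp
    rw [mem_product] at hp
    simp [hnorm _ hp.1, hnorm _ hp.2]
  have hsq := tendsto_cesaroMean_sum_mul_pow _ (fun p => b p.1 * b p.2) _
    fun p hp => (hnorm2 p hp).1
  rw [filter_false_of_mem fun p hp => by rw [mem_product] at hp; exact hmul _ hp.1 _ hp.2,
    sum_empty] at hsq
  have habs := tendsto_cesaroMean_sum_mul_pow _ (fun p => b p.1 * starRingEnd ℂ (b p.2)) _
    fun p hp => (hnorm2 p hp).2
  rw [filter_mul_conj_eq_one_eq_diag hnorm hinj, diag, sum_map] at habs
  have hhh : ∀ n, ∑ p ∈ K ×ˢ K, b p.1 * b p.2 * (μ p.1 * μ p.2) ^ n = h n * h n :=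
    fun n => (sum_mul_pow_mul_sum_mul_pow ..).symm
  have hhc : ∀ n, ∑ p ∈ K ×ˢ K, b p.1 * starRingEnd ℂ (b p.2) * (μ p.1 * starRingEnd ℂ (μ p.2)) ^ n
      = h n * starRingEnd ℂ (h n) := fun n => by
    simp only [h, map_sum, map_mul, map_pow, sum_mul_pow_mul_sum_mul_pow]
  simp only [hhh] at hsq
  simp only [hhc] at habs
  have hhalf : Tendsto
      (fun M => cesaroMean M fun n => (1 / 2 : ℝ) • (h n * h n + h n * starRingEnd ℂ (h n)))
      atTop (𝓝 ((1 / 2 : ℝ) • (0 + ∑ i ∈ K, b i * starRingEnd ℂ (b i)))) := by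
    have hfun : (fun n => (1 / 2 : ℝ) • (h n * h n + h n * starRingEnd ℂ (h n)))
        = (1 / 2 : ℝ) • ((fun n => h n * h n) + fun n => h n * starRingEnd ℂ (h n)) := rfl
    simp only [hfun, map_smul, map_add]
    exact (hsq.add habs).const_smul _
  convert hhalf.comp_cesaroMean Complex.reCLM using 2
  · congr 1
    funext n
    simp only [h, Function.comp_apply, Complex.reCLM_apply, Complex.smul_re, Complex.add_re,
      Complex.mul_re, Complex.conj_re, Complex.conj_im, smul_eq_mul]
    ring
  · simp only [zero_add, Complex.reCLM_apply, Complex.smul_re, Complex.re_sum, Complex.mul_conj,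
      Complex.ofReal_re, Complex.normSq_eq_norm_sq, smul_eq_mul]
    ring

theorem exists_pos_frequently_le_re_sum_mul_pow
    (hnorm : ∀ i ∈ K, ‖μ i‖ = 1) (hinj : Set.InjOn μ K) (hmul : ∀ i ∈ K, ∀ j ∈ K, μ i * μ j ≠ 1)
    (hb : ∃ i ∈ K, b i ≠ 0) :
    ∃ δ > 0, ∃ᶠ n in atTop, δ ≤ (∑ i ∈ K, b i * μ i ^ n).re := by
  have hV : 0 < (∑ i ∈ K, ‖b i‖ ^ 2) / 2 := by
    obtain ⟨i, hi, hbi⟩ := hb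
    have : 0 < ∑ i ∈ K, ‖b i‖ ^ 2 :=
      sum_pos' (fun _ _ => by positivity) ⟨i, hi, by positivity⟩
    positivity
  obtain ⟨δ, hδ, hδV⟩ := exists_pos_mul_lt hV (2 * ∑ i ∈ K, ‖b i‖)
  refine ⟨δ, hδ, frequently_atTop.2 fun m => ?_⟩
  -- Shifting time by `m` multiplies each coefficient by the unimodular factor `μ i ^ m`.
  set b' : ι → ℂ := fun i => b i * μ i ^ m
  have hb' : ∀ i ∈ K, ‖b' i‖ = ‖b i‖ := by
    intro i hi
    simp [b', hnorm i hi]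
  have hbound : ∀ n, |(∑ i ∈ K, b' i * μ i ^ n).re| ≤ ∑ i ∈ K, ‖b i‖ := fun n =>
    calc |(∑ i ∈ K, b' i * μ i ^ n).re| ≤ ∑ i ∈ K, ‖b' i * μ i ^ n‖ :=
          (Complex.abs_re_le_norm _).trans (norm_sum_le _ _)
      _ = ∑ i ∈ K, ‖b i‖ := sum_congr rfl fun i hi => by simp [hb' i hi, hnorm i hi]
  have hsq := tendsto_cesaroMean_re_sum_mul_pow_sq (b := b') hnorm hinj hmul
  rw [sum_congr rfl fun i hi => by rw [hb' i hi]] at hsq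
  obtain ⟨n, hn⟩ := exists_le_of_tendsto_cesaroMean hbound
    (tendsto_cesaroMean_re_sum_mul_pow hnorm fun i hi h1 => hmul i hi i hi (by simp [h1]))
    hsq hδ.le hδV
  refine ⟨n + m, le_add_self, hn.trans_eq ?_⟩
  simp only [b', pow_add, mul_assoc, mul_comm (μ _ ^ m)]

end UnitCircle

theorem div_mul_div_ne_one_of_ne_conj {z w : ℂ} {r : ℝ} (hw : ‖w‖ = r) (hr : r ≠ 0)
    (hzw : z ≠ starRingEnd ℂ w) : z / r * (w / r) ≠ 1 := by
  have hr' : (r : ℂ) ≠ 0 := by exact_mod_cast hr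
  intro h
  apply hzw
  refine mul_right_cancel₀ (norm_ne_zero_iff.1 (hw ▸ hr) : w ≠ 0) ?_
  rw [div_mul_div_comm, div_eq_one_iff_eq (mul_ne_zero hr' hr')] at h
  rw [h, mul_comm (starRingEnd ℂ w), Complex.mul_conj, Complex.normSq_eq_norm_sq, hw]
  push_cast
  ring

theorem tendsto_sum_mul_pow_zero {ι : Type*} {s : Finset ι} {c μ : ι → ℂ}
    (h : ∀ k ∈ s, c k = 0 ∨ ‖μ k‖ < 1) :
    Tendsto (fun n => ∑ k ∈ s, c k * μ k ^ n) atTop (𝓝 0) := by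
  rw [← sum_const_zero (s := s)]
  refine tendsto_finsetSum _ fun k hk => ?_
  rcases h k hk with hc | hμ
  · simp [hc]
  · simpa using (tendsto_pow_atTop_nhds_zero_of_norm_lt_one hμ).const_mul (c k)

theorem exists_lt_pow_mul_add {r δ : ℝ} {g e : ℕ → ℝ} (hr : 1 < r) (hδ : 0 < δ)
    (hg : ∃ᶠ n in atTop, δ ≤ g n) (he : Tendsto e atTop (𝓝 0)) (C : ℝ) :
    ∃ n, C < r ^ n * (g n + e n) := by
  have hbig : Tendsto (fun n => r ^ n * (δ / 2)) atTop atTop :=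
    (tendsto_pow_atTop_atTop_of_one_lt hr).atTop_mul_const (half_pos hδ)
  obtain ⟨n, hgn, hen, hrn⟩ := (hg.and_eventually
    ((he.eventually (lt_mem_nhds (neg_lt_zero.2 (half_pos hδ)))).and
      (hbig.eventually_gt_atTop C))).exists
  refine ⟨n, hrn.trans_le ?_⟩
  gcongr
  linarith

theorem exists_lt_re_sum_mul_pow {ι : Type*} [Fintype ι] {lam : ι → ℂ}
    (hinj : Function.Injective lam) (hgt : ∀ k, 1 < ‖lam k‖)
    (hconj : ∀ j k, lam j ≠ starRingEnd ℂ (lam k)) {c : ι → ℂ} (hc : c ≠ 0) (C : ℝ) :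
    ∃ n, C < (∑ k, c k * lam k ^ n).re := by
  classical
  obtain ⟨k₀, hk₀⟩ := Function.ne_iff.mp hc
  set S := univ.filter (c · ≠ 0)
  have hS : S.Nonempty := ⟨k₀, by simpa [S] using hk₀⟩
  set r := S.sup' hS (‖lam ·‖)
  obtain ⟨k₁, hk₁S, hk₁⟩ := exists_mem_eq_sup' hS (‖lam ·‖)
  have hr : 1 < r := (hgt k₁).trans_eq hk₁.symm
  have hr0 : 0 < r := zero_lt_one.trans hr
  have hr0' : (r : ℂ) ≠ 0 := by exact_mod_cast hr0.ne'
  set K := S.filter (‖lam ·‖ = r)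
  set μ : ι → ℂ := fun k => lam k / r
  have hμK : ∀ k ∈ K, ‖μ k‖ = 1 := fun k hk => by
    simp [μ, (mem_filter.1 hk).2, abs_of_pos hr0, hr0.ne']
  have hμinj : Set.InjOn μ K := fun i _ j _ h =>
    hinj ((div_left_inj' hr0').1 h)
  have hμmul : ∀ i ∈ K, ∀ j ∈ K, μ i * μ j ≠ 1 := fun i _ j hj =>
    div_mul_div_ne_one_of_ne_conj (mem_filter.1 hj).2 hr0.ne' (hconj i j)
  have hK : ∃ k ∈ K, c k ≠ 0 := ⟨k₁, mem_filter.2 ⟨hk₁S, hk₁.symm⟩, (mem_filter.1 hk₁S).2⟩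
  obtain ⟨δ, hδ, hfreq⟩ := exists_pos_frequently_le_re_sum_mul_pow hμK hμinj hμmul hK
  have htail : Tendsto (fun n => (∑ k ∈ Kᶜ, c k * μ k ^ n).re) atTop (𝓝 0) := by
    refine Complex.zero_re ▸ (Complex.continuous_re.tendsto 0).comp
      (tendsto_sum_mul_pow_zero fun k hk => or_iff_not_imp_left.2 fun hck => ?_)
    have hkS : k ∈ S := by simpa [S] using hck
    have hlt : ‖lam k‖ < r :=
      (le_sup' (‖lam ·‖) hkS).lt_of_ne fun he => mem_compl.1 hk (mem_filter.2 ⟨hkS, he⟩)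
    simpa [μ, abs_of_pos hr0, div_lt_one hr0] using hlt
  obtain ⟨n, hn⟩ := exists_lt_pow_mul_add hr hδ hfreq htail C
  refine ⟨n, hn.trans_eq ?_⟩
  have hlam : ∀ k, c k * lam k ^ n = ((r ^ n : ℝ) : ℂ) * (c k * μ k ^ n) := fun k => by
    simp only [μ, div_pow]
    push_cast
    field_simp
  simp only [hlam, ← mul_sum, ← Complex.add_re, sum_add_sum_compl, Complex.re_ofReal_mul]

theorem isConvexPoly_X_pow (n : ℕ) : IsConvexPoly (X ^ n) :=
  ⟨n, Pi.single n 1, fun k => by by_cases h : k = n <;> simp [h], by simp,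
    by simp [Pi.single_apply, apply_ite]⟩

theorem sum_range_succ_ite_le {M : Type*} [AddCommMonoid M] (f : ℕ → M) {n L : ℕ} (h : n ≤ L) :
    ∑ k ∈ range (L + 1), (if k ≤ n then f k else 0) = ∑ k ∈ range (n + 1), f k := by
  rw [← sum_filter]
  congr 1
  ext k
  simp only [mem_filter, mem_range]
  omega

theorem IsConvexPoly.exists_of_le {p : ℂ[X]} (hp : IsConvexPoly p) :
    ∃ n, ∀ L ≥ n, ∃ a : ℕ → ℝ, (∀ k, 0 ≤ a k) ∧ ∑ k ∈ range (L + 1), a k = 1 ∧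
      p = ∑ k ∈ range (L + 1), C (a k : ℂ) * X ^ k := by
  obtain ⟨n, a, ha, ha1, rfl⟩ := hp
  refine ⟨n, fun L hL => ⟨fun k => if k ≤ n then a k else 0, fun k => ?_,
    by rw [sum_range_succ_ite_le a hL, ha1], ?_⟩⟩
  · dsimp only
    split_ifs
    exacts [ha k, le_rfl]
  · rw [← sum_range_succ_ite_le _ hL]
    refine sum_congr rfl fun k _ => ?_
    by_cases h : k ≤ n <;> simp [h]

theorem convex_setOf_isConvexPoly : Convex ℝ {p : ℂ[X] | IsConvexPoly p} := by
  intro p hp q hq s t hs ht hst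
  obtain ⟨n, hn⟩ := hp.exists_of_le
  obtain ⟨m, hm⟩ := hq.exists_of_le
  obtain ⟨a, ha, ha1, rfl⟩ := hn (max n m) (le_max_left _ _)
  obtain ⟨b, hb, hb1, rfl⟩ := hm (max n m) (le_max_right _ _)
  refine ⟨max n m, fun k => s * a k + t * b k, fun k => by have := ha k; have := hb k; positivity,
    by simp [sum_add_distrib, ← mul_sum, ha1, hb1, hst], ?_⟩
  simp only [smul_sum, ← sum_add_distrib]
  refine sum_congr rfl fun k _ => ?_
  simp only [← smul_mul_assoc, Polynomial.smul_C, ← add_mul, ← map_add, Complex.real_smul]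
  push_cast
  rfl

theorem IsConvexPoly.norm_aeval_le_one {p : ℂ[X]} (hp : IsConvexPoly p) {z : ℂ} (hz : ‖z‖ ≤ 1) :
    ‖aeval z p‖ ≤ 1 := by
  obtain ⟨n, a, ha, ha1, rfl⟩ := hp
  calc ‖aeval z (∑ k ∈ range (n + 1), C (a k : ℂ) * X ^ k)‖
      = ‖∑ k ∈ range (n + 1), (a k : ℂ) * z ^ k‖ := by simp
    _ ≤ ∑ k ∈ range (n + 1), a k := (norm_sum_le _ _).trans <| sum_le_sum fun k _ => by
        rw [norm_mul, norm_pow, Complex.norm_real, Real.norm_of_nonneg (ha k)]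
        exact mul_le_of_le_one_right (ha k) (pow_le_one₀ (norm_nonneg z) hz)
    _ = 1 := ha1

theorem IsConvexPoly.aeval_conj {p : ℂ[X]} (hp : IsConvexPoly p) (z : ℂ) :
    aeval (starRingEnd ℂ z) p = starRingEnd ℂ (aeval z p) := by
  obtain ⟨n, a, -, -, rfl⟩ := hp
  simp [map_sum]

theorem aeval_diagonal {n R : Type*} [Fintype n] [DecidableEq n] [CommSemiring R] (d : n → R)
    (p : R[X]) : aeval (Matrix.diagonal d) p = Matrix.diagonal fun i => aeval (d i) p := by
  rw [← Matrix.diagonalAlgHom_apply R, aeval_algHom_apply, aeval_pi_apply,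
    Matrix.diagonalAlgHom_apply]

theorem convex_setOf_aeval_mulVec {n : Type*} [Fintype n] [DecidableEq n] (T : Matrix n n ℂ)
    (v : n → ℂ) : Convex ℝ {w | ∃ p, IsConvexPoly p ∧ (aeval T p).mulVec v = w} := by
  rintro _ ⟨p, hp, rfl⟩ _ ⟨q, hq, rfl⟩ s t hs ht hst
  refine ⟨s • p + t • q, convex_setOf_isConvexPoly hp hq hs ht hst, ?_⟩
  simp [Matrix.add_mulVec, AlgHom.map_smul_of_tower, Matrix.smul_mulVec]

theorem mulVec_aeval_diagonal {n : Type*} [Fintype n] [DecidableEq n] (lam v : n → ℂ) (p : ℂ[X]) :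
    (aeval (Matrix.diagonal lam) p).mulVec v = fun k => aeval (lam k) p * v k := by
  rw [aeval_diagonal]
  exact funext (Matrix.mulVec_diagonal _ _)

namespace IsConvexCyclicVector

variable {N : ℕ}

theorem mem_of_isClosed {T : Matrix (Fin N) (Fin N) ℂ} {v : Fin N → ℂ}
    (h : IsConvexCyclicVector T v) {F : Set (Fin N → ℂ)} (hF : IsClosed F)
    (hTF : ∀ p, IsConvexPoly p → (aeval T p).mulVec v ∈ F) (y : Fin N → ℂ) : y ∈ F :=
  hF.closure_subset_iff.2 (by rintro _ ⟨p, hp, rfl⟩; exact hTF p hp) (h y)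

variable {lam v : Fin N → ℂ}

theorem apply_ne_zero (h : IsConvexCyclicVector (Matrix.diagonal lam) v) (i : Fin N) :
    v i ≠ 0 := fun hvi => by
  simpa using h.mem_of_isClosed (F := {w | w i = 0})
    (isClosed_eq (continuous_apply i) continuous_const)
    (fun p _ => by simp [mulVec_aeval_diagonal, hvi]) 1

theorem injective (h : IsConvexCyclicVector (Matrix.diagonal lam) v) : Function.Injective lam := by
  intro j k hjk
  by_contra hne
  have := h.mem_of_isClosed (F := {w | w j * v k = w k * v j})
    (isClosed_eq (by fun_prop) (by fun_prop))
    (fun p _ => by simp only [mulVec_aeval_diagonal, hjk, Set.mem_ofPred_eq]; ring) (Pi.single j 1)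
  simp [Ne.symm hne] at this
  exact h.apply_ne_zero k this

theorem one_lt_norm (h : IsConvexCyclicVector (Matrix.diagonal lam) v) (k : Fin N) :
    1 < ‖lam k‖ := by
  by_contra! hk
  have := h.mem_of_isClosed (F := {w | ‖w k‖ ≤ ‖v k‖}) (isClosed_le (by fun_prop) continuous_const)
    (fun p hp => by
      simpa [mulVec_aeval_diagonal] using
        mul_le_of_le_one_left (norm_nonneg (v k)) (hp.norm_aeval_le_one hk))
    (fun _ => ((‖v k‖ + 1 : ℝ) : ℂ))
  simp only [Set.mem_ofPred_eq, Complex.norm_real, Real.norm_eq_abs] at this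
  linarith [le_abs_self (‖v k‖ + 1)]

theorem ne_conj (h : IsConvexCyclicVector (Matrix.diagonal lam) v) (j k : Fin N) :
    lam j ≠ starRingEnd ℂ (lam k) := by
  intro hjk
  have := h.mem_of_isClosed (F := {w | w j * starRingEnd ℂ (v k) = starRingEnd ℂ (w k) * v j})
    (isClosed_eq (by fun_prop) (by fun_prop))
    (fun p hp => by
      simp only [mulVec_aeval_diagonal, hjk, hp.aeval_conj, Set.mem_ofPred_eq, map_mul]
      ring)
    (Complex.I • v)
  -- `I • v` would make `v j * conj (v k)` purely imaginary and real at once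
  have h2 : 2 * Complex.I * (v j * starRingEnd ℂ (v k)) = 0 := by
    simp only [Set.mem_ofPred_eq, Pi.smul_apply, smul_eq_mul, map_mul, Complex.conj_I] at this
    linear_combination this
  simp [h.apply_ne_zero j, h.apply_ne_zero k] at h2

end IsConvexCyclicVector

theorem isConvexCyclicVector_diagonal {N : ℕ} {lam : Fin N → ℂ} (hinj : Function.Injective lam)
    (hgt : ∀ k, 1 < ‖lam k‖) (hconj : ∀ j k, lam j ≠ starRingEnd ℂ (lam k)) {v : Fin N → ℂ}
    (hv : ∀ i, v i ≠ 0) : IsConvexCyclicVector (Matrix.diagonal lam) v := by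
  set S := {w | ∃ p, IsConvexPoly p ∧ (aeval (Matrix.diagonal lam) p).mulVec v = w}
  by_contra hS
  obtain ⟨y, hy⟩ : ∃ y, y ∉ closure S := by simpa [IsConvexCyclicVector, Dense] using hS
  obtain ⟨f, u, hfS, hfy⟩ := RCLike.geometric_hahn_banach_closed_point (𝕜 := ℂ)
    (convex_setOf_aeval_mulVec _ v).closure isClosed_closure hy
  have hpow : ∀ n, (fun k => lam k ^ n * v k) ∈ closure S := fun n =>
    subset_closure ⟨X ^ n, isConvexPoly_X_pow n, by rw [mulVec_aeval_diagonal]; simp⟩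
  set e : Fin N → Fin N → ℂ := fun k j => if k = j then 1 else 0
  have hf : ∀ w, f w = ∑ k, f (e k) * w k := fun w => by
    rw [← ContinuousLinearMap.coe_coe, LinearMap.pi_apply_eq_sum_univ]
    simp [e, mul_comm]
  have hc : (fun k => f (e k) * v k) ≠ 0 := by
    intro hc
    have hf0 : ∀ w, f w = 0 := fun w => by
      rw [hf]
      refine sum_eq_zero fun k _ => ?_
      simp [(mul_eq_zero.1 (congrFun hc k)).resolve_right (hv k)]
    have := hfS _ (hpow 0)
    simp [hf0] at this hfy
    linarith
  obtain ⟨n, hn⟩ := exists_lt_re_sum_mul_pow hinj hgt hconj hc u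
  have := hfS _ (hpow n)
  rw [hf] at this
  simp only [RCLike.re_to_complex] at this
  refine this.not_gt (hn.trans_eq ?_)
  congr 1
  refine sum_congr rfl fun k _ => by ring

/-- Convex-cyclicity of complex diagonal matrices. -/
theorem diagonal_convexCyclic_iff {N : ℕ} (lam : Fin N → ℂ)
    (T : Matrix (Fin N) (Fin N) ℂ) (hT : T = Matrix.diagonal lam) :
    ((∃ v, IsConvexCyclicVector T v) ↔
      (Function.Injective lam ∧ (∀ k, 1 < ‖lam k‖) ∧
        ∀ j k, lam j ≠ starRingEnd ℂ (lam k))) ∧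
    ((Function.Injective lam ∧ (∀ k, 1 < ‖lam k‖) ∧
        ∀ j k, lam j ≠ starRingEnd ℂ (lam k)) →
      ∀ v, IsConvexCyclicVector T v ↔ ∀ i, v i ≠ 0) := by
  subst hT
  refine ⟨⟨fun ⟨v, hv⟩ => ⟨hv.injective, hv.one_lt_norm, hv.ne_conj⟩, fun ⟨hinj, hgt, hconj⟩ =>
    ⟨1, isConvexCyclicVector_diagonal hinj hgt hconj fun _ => one_ne_zero⟩⟩, ?_⟩
  rintro ⟨hinj, hgt, hconj⟩ v
  exact ⟨fun hv => hv.apply_ne_zero, isConvexCyclicVector_diagonal hinj hgt hconj⟩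
end

section
/- Let T = diag(λ₁, ..., λ_N) be a diagonal matrix on ℝ^N. Then T is convex-cyclic on ℝ^N if and only if the λ_k are distinct and λ_k < −1 for all k. When convex-cyclic, the convex-cyclic vectors are exactly the vectors with all coordinates nonzero. -/
/-- A real convex-polynomial: a convex combination of the monomials `1, x, x², …`. -/
def IsConvexPolyR (p : Polynomial ℝ) : Prop :=
  ∃ (n : ℕ) (a : ℕ → ℝ), (∀ k, 0 ≤ a k) ∧ (∑ k ∈ Finset.range (n + 1), a k) = 1 ∧
    p = ∑ k ∈ Finset.range (n + 1), Polynomial.C (a k) * Polynomial.X ^ k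

/-- `v` is a convex-cyclic vector for the matrix `T` on `ℝ^N`. -/
def IsConvexCyclicVectorR {N : ℕ} (T : Matrix (Fin N) (Fin N) ℝ) (v : Fin N → ℝ) : Prop :=
  Dense {w : Fin N → ℝ | ∃ p, IsConvexPolyR p ∧ (Polynomial.aeval T p).mulVec v = w}

/-!
For `T = diag(λ)` the convex orbit of `v` is `{(p(λₖ) vₖ)ₖ : p convex}`, a convex set.
A zero coordinate of `v`, an eigenvalue `λₖ ≥ -1` (then `p(λₖ) ≥ -1`), or a repeated eigenvalue
each confine the orbit to a proper closed subset. Conversely, if the orbit closure missed a point,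
Hahn–Banach would give a functional `f` bounded above on the orbit; but `f (Tⁿ v) = ∑ cₖ λₖⁿ`,
and since the `λₖ < -1` are distinct, the term with the largest `|λₖ|` among those with `cₖ ≠ 0`
dominates and is positive for every other `n`, so this is unbounded unless `f = 0`.
-/

open Polynomial Matrix Filter Topology

theorem neg_one_le_pow_of_neg_one_le {x : ℝ} (hx : -1 ≤ x) (n : ℕ) : -1 ≤ x ^ n := by
  rcases le_total 0 x with h | h
  · linarith [pow_nonneg h n]
  · have : |x ^ n| ≤ 1 := by
      rw [abs_pow]
      exact pow_le_one₀ (abs_nonneg x) (abs_le.2 ⟨hx, by linarith⟩)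
    exact (abs_le.1 this).1

theorem isConvexPolyR_iff {p : ℝ[X]} :
    IsConvexPolyR p ↔ (∀ k, 0 ≤ p.coeff k) ∧ p.eval 1 = 1 := by
  constructor
  · rintro ⟨n, a, ha, hsum, rfl⟩
    refine ⟨fun k => ?_, by simpa [eval_finsetSum] using hsum⟩
    simp only [finsetSum_coeff, coeff_C_mul_X_pow]
    exact Finset.sum_nonneg fun i _ => by split_ifs <;> simp [ha]
  · rintro ⟨hcoeff, heval⟩
    refine ⟨p.natDegree, p.coeff, hcoeff, ?_, p.as_sum_range_C_mul_X_pow⟩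
    simpa [eval_eq_sum_range] using heval

theorem isConvexPolyR_X_pow (n : ℕ) : IsConvexPolyR (X ^ n) :=
  isConvexPolyR_iff.2 ⟨fun k => by rw [coeff_X_pow]; split_ifs <;> norm_num, by simp⟩

theorem convex_setOf_isConvexPolyR : Convex ℝ {p : ℝ[X] | IsConvexPolyR p} := by
  intro p hp q hq s t hs ht hst
  simp only [Set.mem_ofPred_eq, isConvexPolyR_iff] at *
  refine ⟨fun k => ?_, by simp [hp.2, hq.2, hst]⟩
  simp only [coeff_add, coeff_smul, smul_eq_mul]
  exact add_nonneg (mul_nonneg hs (hp.1 k)) (mul_nonneg ht (hq.1 k))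

theorem IsConvexPolyR.neg_one_le_eval {p : ℝ[X]} (hp : IsConvexPolyR p) {x : ℝ}
    (hx : -1 ≤ x) : -1 ≤ p.eval x := by
  obtain ⟨hcoeff, heval⟩ := isConvexPolyR_iff.1 hp
  rw [eval_eq_sum_range] at heval ⊢
  simp only [one_pow, mul_one] at heval
  calc (-1 : ℝ) = ∑ i ∈ Finset.range (p.natDegree + 1), p.coeff i * (-1) := by
        rw [← Finset.sum_mul, heval, one_mul]
    _ ≤ _ := Finset.sum_le_sum fun i _ =>
        mul_le_mul_of_nonneg_left (neg_one_le_pow_of_neg_one_le hx i) (hcoeff i)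

theorem Matrix.aeval_diagonal_mulVec {ι R : Type*} [Fintype ι] [DecidableEq ι] [CommRing R]
    (d v : ι → R) (p : R[X]) :
    aeval (diagonal d) p *ᵥ v = fun k => p.eval (d k) * v k := by
  rw [← diagonalAlgHom_apply (R := R), aeval_algHom_apply]
  ext k
  simp [mulVec_diagonal, aeval_fn_apply]

def convexOrbit {N : ℕ} (T : Matrix (Fin N) (Fin N) ℝ) (v : Fin N → ℝ) : Set (Fin N → ℝ) :=
  {w | ∃ p, IsConvexPolyR p ∧ aeval T p *ᵥ v = w}

theorem isConvexCyclicVectorR_iff_dense {N : ℕ} {T : Matrix (Fin N) (Fin N) ℝ} {v : Fin N → ℝ} :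
    IsConvexCyclicVectorR T v ↔ Dense (convexOrbit T v) :=
  Iff.rfl

theorem convex_convexOrbit {N : ℕ} (T : Matrix (Fin N) (Fin N) ℝ) (v : Fin N → ℝ) :
    Convex ℝ (convexOrbit T v) := by
  rintro _ ⟨p, hp, rfl⟩ _ ⟨q, hq, rfl⟩ s t hs ht hst
  exact ⟨s • p + t • q, convex_setOf_isConvexPolyR hp hq hs ht hst,
    by simp [add_mulVec, smul_mulVec]⟩

theorem convexOrbit_diagonal {N : ℕ} (lam v : Fin N → ℝ) :
    convexOrbit (diagonal lam) v =
      {w | ∃ p, IsConvexPolyR p ∧ (fun k => p.eval (lam k) * v k) = w} := by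
  simp only [convexOrbit, aeval_diagonal_mulVec]

theorem not_dense_of_subset_isClosed {X : Type*} [TopologicalSpace X] {s t : Set X}
    (hst : s ⊆ t) (ht : IsClosed t) {x : X} (hx : x ∉ t) : ¬ Dense s :=
  fun hs => hx (closure_minimal hst ht (hs x))

section Necessity

variable {N : ℕ} {lam v : Fin N → ℝ}

theorem ne_zero_of_dense_convexOrbit_diagonal (hv : Dense (convexOrbit (diagonal lam) v))
    (i : Fin N) : v i ≠ 0 := by
  intro hvi
  refine not_dense_of_subset_isClosed (t := {w : Fin N → ℝ | w i = 0}) ?_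
    (isClosed_eq (by fun_prop) continuous_const) (x := Pi.single i 1) (by simp) hv
  rw [convexOrbit_diagonal]
  rintro _ ⟨p, -, rfl⟩
  simp [hvi]

theorem injective_of_dense_convexOrbit_diagonal (hv : Dense (convexOrbit (diagonal lam) v)) :
    Function.Injective lam := by
  intro i j hij
  by_contra hne
  have hvi := ne_zero_of_dense_convexOrbit_diagonal hv i
  have hvj := ne_zero_of_dense_convexOrbit_diagonal hv j
  refine not_dense_of_subset_isClosed (t := {w : Fin N → ℝ | w i * v j = w j * v i}) ?_
    (isClosed_eq (by fun_prop) (by fun_prop)) (x := Pi.single i 1) ?_ hv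
  · rw [convexOrbit_diagonal]
    rintro _ ⟨p, -, rfl⟩
    simp only [Set.mem_ofPred_eq, hij]
    ring
  · simp [Pi.single_eq_of_ne' hne, hvj]

theorem lt_neg_one_of_dense_convexOrbit_diagonal (hv : Dense (convexOrbit (diagonal lam) v))
    (k : Fin N) : lam k < -1 := by
  by_contra! hk
  have hvk := ne_zero_of_dense_convexOrbit_diagonal hv k
  -- orbit points have `w k = p (lam k) * v k` with `p (lam k) ≥ -1`
  refine not_dense_of_subset_isClosed (t := {w : Fin N → ℝ | -v k ^ 2 ≤ w k * v k}) ?_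
    (isClosed_le continuous_const (by fun_prop)) (x := Pi.single k (-2 * v k)) ?_ hv
  · rw [convexOrbit_diagonal]
    rintro _ ⟨p, hp, rfl⟩
    have := hp.neg_one_le_eval hk
    simp only [Set.mem_ofPred_eq]
    nlinarith [sq_nonneg (v k)]
  · simp only [Set.mem_ofPred_eq, Pi.single_eq_same, not_le]
    nlinarith [sq_pos_of_ne_zero hvk]

end Necessity

theorem tendsto_sum_mul_div_pow {ι : Type*} [Fintype ι] (c μ : ι → ℝ) {j : ι} (hj : μ j ≠ 0)
    (hdom : ∀ k ≠ j, c k ≠ 0 → |μ k| < |μ j|) :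
    Tendsto (fun n : ℕ => ∑ k, c k * (μ k / μ j) ^ n) atTop (𝓝 (c j)) := by
  classical
  rw [← Fintype.sum_ite_eq' j c]
  refine tendsto_finsetSum _ fun k _ => ?_
  split_ifs with hkj
  · subst hkj
    simp [div_self hj]
  by_cases hck : c k = 0
  · simp [hck]
  have hratio : |μ k / μ j| < 1 := by
    rw [abs_div, div_lt_one (abs_pos.2 hj)]
    exact hdom k hkj hck
  simpa using (tendsto_pow_atTop_nhds_zero_of_abs_lt_one hratio).const_mul (c k)

theorem not_bddAbove_range_sum_mul_pow {ι : Type*} [Fintype ι] {lam : ι → ℝ}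
    (hinj : Function.Injective lam) (hlt : ∀ k, lam k < -1) {c : ι → ℝ} (hc : c ≠ 0) :
    ¬ BddAbove (Set.range fun n : ℕ => ∑ k, c k * lam k ^ n) := by
  classical
  obtain ⟨k₀, hk₀⟩ := Function.ne_iff.1 hc
  obtain ⟨j, hj, hjmax⟩ :=
    Finset.exists_max_image {k | c k ≠ 0} (fun k => |lam k|) ⟨k₀, by simpa using hk₀⟩
  have hcj : c j ≠ 0 := by simpa using hj
  have hlamj : lam j ≠ 0 := ((hlt j).trans neg_one_lt_zero).ne
  -- on the support of `c`, `|lam|` is injective because `lam` is negative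
  have hdom : ∀ k ≠ j, c k ≠ 0 → |lam k| < |lam j| := by
    intro k hkj hck
    refine (hjmax k (by simpa using hck)).lt_of_ne fun habs => hkj (hinj ?_)
    rwa [abs_of_neg (by linarith [hlt k]), abs_of_neg (by linarith [hlt j]), neg_inj] at habs
  -- choose the parity `s` of the exponent so that the dominant term is positive
  obtain ⟨s, hs⟩ : ∃ s : ℕ, 0 < lam j ^ s * c j := by
    rcases hcj.lt_or_gt with hneg | hpos
    · exact ⟨1, by rw [pow_one]; exact mul_pos_of_neg_of_neg (by linarith [hlt j]) hneg⟩
    · exact ⟨0, by simpa using hpos⟩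
  have hsplit : ∀ m : ℕ, ∑ k, c k * lam k ^ (2 * m + s) =
      (lam j ^ 2) ^ m * (lam j ^ s * ∑ k, c k * (lam k / lam j) ^ (2 * m + s)) := by
    intro m
    rw [Finset.mul_sum, Finset.mul_sum]
    refine Finset.sum_congr rfl fun k _ => ?_
    rw [div_pow, ← pow_mul, ← mul_assoc, ← pow_add, mul_left_comm,
      mul_div_cancel₀ _ (pow_ne_zero _ hlamj)]
  have hsub : Tendsto (fun m : ℕ => 2 * m + s) atTop atTop :=
    tendsto_atTop_mono (fun m => show m ≤ 2 * m + s by omega) tendsto_id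
  have htend : Tendsto (fun m : ℕ => ∑ k, c k * lam k ^ (2 * m + s)) atTop atTop := by
    simp only [hsplit]
    refine Tendsto.atTop_mul_pos hs (tendsto_pow_atTop_atTop_of_one_lt ?_)
      (((tendsto_sum_mul_div_pow c lam hlamj hdom).comp hsub).const_mul _)
    nlinarith [hlt j]
  exact fun hbdd => not_bddAbove_of_tendsto_atTop htend
    (hbdd.mono (Set.range_comp_subset_range (fun m => 2 * m + s)
      fun n => ∑ k, c k * lam k ^ n))

theorem dense_convexOrbit_diagonal {N : ℕ} {lam : Fin N → ℝ} (hinj : Function.Injective lam)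
    (hlt : ∀ k, lam k < -1) {v : Fin N → ℝ} (hv : ∀ k, v k ≠ 0) :
    Dense (convexOrbit (diagonal lam) v) := by
  by_contra hnd
  obtain ⟨x, hx⟩ := (Set.ne_univ_iff_exists_notMem _).1 (mt dense_iff_closure_eq.2 hnd)
  obtain ⟨f, u, hfu, hux⟩ :=
    geometric_hahn_banach_closed_point (convex_convexOrbit _ v).closure isClosed_closure hx
  set e : Fin N → Fin N → ℝ := fun k j => if k = j then 1 else 0
  have hf : ∀ w, f w = ∑ k, w k * f (e k) := fun w => by
    simpa using LinearMap.pi_apply_eq_sum_univ f.toLinearMap w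
  set c : Fin N → ℝ := fun k => v k * f (e k)
  have horbit : ∀ n : ℕ, ∑ k, c k * lam k ^ n < u := fun n => by
    have hmem : (fun k => lam k ^ n * v k) ∈ convexOrbit (diagonal lam) v := by
      rw [convexOrbit_diagonal]
      exact ⟨X ^ n, isConvexPolyR_X_pow n, by simp⟩
    convert hfu _ (subset_closure hmem) using 1
    rw [hf]
    exact Finset.sum_congr rfl fun k _ => by ring
  have hc : c = 0 := by
    by_contra hc
    exact not_bddAbove_range_sum_mul_pow hinj hlt hc ⟨u, by
      rintro _ ⟨n, rfl⟩
      exact (horbit n).le⟩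
  have hfe : ∀ k, f (e k) = 0 := fun k =>
    (mul_eq_zero.1 (congrFun hc k)).resolve_left (hv k)
  have hu : 0 < u := by simpa [hc] using horbit 0
  have hfx : f x = 0 := by simp [hf x, hfe]
  linarith

/-- Convex-cyclicity of real diagonal matrices. -/
theorem diagonal_convexCyclic_iff_real {N : ℕ} (lam : Fin N → ℝ)
    (T : Matrix (Fin N) (Fin N) ℝ) (hT : T = Matrix.diagonal lam) :
    ((∃ v, IsConvexCyclicVectorR T v) ↔
      (Function.Injective lam ∧ ∀ k, lam k < -1)) ∧
    ((Function.Injective lam ∧ ∀ k, lam k < -1) →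
      ∀ v, IsConvexCyclicVectorR T v ↔ ∀ i, v i ≠ 0) := by
  subst hT
  simp only [isConvexCyclicVectorR_iff_dense]
  refine ⟨⟨fun ⟨v, hv⟩ => ?_, fun ⟨hinj, hlt⟩ => ?_⟩, fun ⟨hinj, hlt⟩ v => ?_⟩
  · exact ⟨injective_of_dense_convexOrbit_diagonal hv,
      lt_neg_one_of_dense_convexOrbit_diagonal hv⟩
  · exact ⟨1, dense_convexOrbit_diagonal hinj hlt fun _ => one_ne_zero⟩
  · exact ⟨ne_zero_of_dense_convexOrbit_diagonal, dense_convexOrbit_diagonal hinj hlt⟩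
end
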